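/- Let $U \in \mathbb{Q}[[s]]$ be a formal power series with zero constant term satisfying $U = \frac{s}{3} + \frac{1}{2}U^2 + \frac{s}{3}\,(5D+1)(5D-1)\,U$, where $D = s\frac{d}{ds}$. Then the following differential equation holds: $\frac{4}{15}\,(5D-3)(5D-5)(5D-7)(5D-9)(5D-11)\,\big(s^2 U\big) = -(5D-3)\big(6U^2 - 2U^3\big) + 12\,(D-1)\big(U - \tfrac{s}{3}\big) - 28\,s^2$. -/

import Mathlib

open PowerSeries

/-- The Euler operator `D = s * d/ds` on formal power series over `ℚ`. -/
noncomputable def eulerD (U : PowerSeries ℚ) : PowerSeries ℚ :=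
  X * PowerSeries.derivative ℚ U

/-- The operator `5D - c` on formal power series over `ℚ`. -/
noncomputable def fD (c : ℚ) (V : PowerSeries ℚ) : PowerSeries ℚ :=
  5 * eulerD V - C c * V

/-!
Commuting `s = X` through the operators, `(5D - c)(s f) = s (5D - (c - 5)) f`, turns the left side
into `(4/15) s (5D + 2)(5D)(5D - 2)(s W)` with `W = (5D + 1)(5D - 1) U`, and the equation for `U`
reads `2 s W = 6U - 2s - 3U²`. After this substitution both sides are polynomials in
`s, U, DU, D²U, D³U`; they agree modulo the equation and its image under `D`, which eliminate
`s D²U` and `s D³U`.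
-/

theorem eulerD_add (f g : ℚ⟦X⟧) : eulerD (f + g) = eulerD f + eulerD g := by
  simp only [eulerD, map_add, mul_add]

theorem eulerD_sub (f g : ℚ⟦X⟧) : eulerD (f - g) = eulerD f - eulerD g := by
  simp only [eulerD, map_sub, mul_sub]

theorem eulerD_neg (f : ℚ⟦X⟧) : eulerD (-f) = -eulerD f := by
  simp only [eulerD, map_neg, mul_neg]

theorem eulerD_mul (f g : ℚ⟦X⟧) : eulerD (f * g) = f * eulerD g + g * eulerD f := by
  simp only [eulerD, Derivation.leibniz, smul_eq_mul]
  ring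

theorem eulerD_pow_succ (f : ℚ⟦X⟧) (n : ℕ) :
    eulerD (f ^ (n + 1)) = (n + 1) * f ^ n * eulerD f := by
  simp only [eulerD, Derivation.leibniz_pow, smul_eq_mul, nsmul_eq_mul, Nat.add_sub_cancel,
    Nat.cast_add, Nat.cast_one]
  ring

theorem eulerD_C (a : ℚ) : eulerD (C a) = 0 := by
  simp [eulerD]

theorem eulerD_zero : eulerD 0 = 0 := by
  simp [eulerD]

theorem eulerD_one : eulerD 1 = 0 := by
  simp [eulerD]

theorem eulerD_ofNat (n : ℕ) [n.AtLeastTwo] :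
    eulerD (no_index (OfNat.ofNat n : ℚ⟦X⟧)) = 0 := by
  rw [← map_ofNat C n, eulerD_C]

theorem eulerD_X : eulerD X = X := by
  simp [eulerD]

theorem fD_X_mul (c : ℚ) (f : ℚ⟦X⟧) : fD c (X * f) = X * fD (c - 5) f := by
  simp only [fD, eulerD_mul, eulerD_X, map_sub, map_ofNat]
  ring

theorem fD_mul_of_eulerD_eq_zero {a : ℚ⟦X⟧} (ha : eulerD a = 0) (c : ℚ) (f : ℚ⟦X⟧) :
    fD c (a * f) = a * fD c f := by
  simp only [fD, eulerD_mul, ha]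
  ring

theorem fD_neg_one_fD_one (f : ℚ⟦X⟧) : fD (-1) (fD 1 f) = 25 * eulerD (eulerD f) - f := by
  simp only [fD, eulerD_sub, eulerD_mul, eulerD_ofNat, eulerD_one, map_neg, map_one]
  ring

theorem fD_fD_fD_fD_fD_X_sq_mul (f : ℚ⟦X⟧) :
    fD 3 (fD 5 (fD 7 (fD 9 (fD 11 (X ^ 2 * f)))))
      = X * fD (-2) (fD 0 (fD 2 (X * fD (-1) (fD 1 f)))) := by
  simp only [sq, mul_assoc, fD_X_mul]
  norm_num

theorem two_mul_X_mul_fD_neg_one_fD_one_of_eq {U : ℚ⟦X⟧}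
    (hU : U = C (1/3) * X + C (1/2) * U ^ 2 + C (1/3) * X * (25 * eulerD (eulerD U) - U)) :
    2 * (X * fD (-1) (fD 1 U)) = 6 * U - 2 * X - 3 * U ^ 2 := by
  have h3 : (3 : ℚ⟦X⟧) * C (1/3) = 1 := by rw [← map_ofNat C 3, ← map_mul]; norm_num
  have h2 : (2 : ℚ⟦X⟧) * C (1/2) = 1 := by rw [← map_ofNat C 2, ← map_mul]; norm_num
  rw [fD_neg_one_fD_one]
  linear_combination (-6 : ℚ⟦X⟧) * hU - (2 * X + 2 * X * (25 * eulerD (eulerD U) - U)) * h3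
    - 3 * U ^ 2 * h2

theorem stmt_2_general (U : PowerSeries ℚ)
    (hU : U = C (1/3) * X + C (1/2) * U ^ 2
        + C (1/3) * X * (25 * eulerD (eulerD U) - U)) :
    C (4/15) * fD 3 (fD 5 (fD 7 (fD 9 (fD 11 (X ^ 2 * U)))))
      = -(fD 3 (6 * U ^ 2 - 2 * U ^ 3))
        + 12 * (eulerD (U - C (1/3) * X) - (U - C (1/3) * X))
        - 28 * X ^ 2 := by
  have h15 : (15 : ℚ⟦X⟧) * C (4/15) = 4 := by
    rw [← map_ofNat C 15, ← map_mul, ← map_ofNat C 4]; norm_num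
  have hW := two_mul_X_mul_fD_neg_one_fD_one_of_eq hU
  have hW' := congrArg eulerD hW
  apply mul_left_cancel₀ (show (15 : ℚ⟦X⟧) ≠ 0 by
    rw [← map_ofNat C 15, Ne, map_eq_zero_iff C C_injective]; norm_num)
  calc 15 * (C (4/15) * fD 3 (fD 5 (fD 7 (fD 9 (fD 11 (X ^ 2 * U))))))
      = 2 * (X * fD (-2) (fD 0 (fD 2 (2 * (X * fD (-1) (fD 1 U)))))) := by
        rw [fD_fD_fD_fD_fD_X_sq_mul, ← mul_assoc, h15]
        simp only [fD_mul_of_eulerD_eq_zero (eulerD_ofNat 2)]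
        ring
    _ = 2 * (X * fD (-2) (fD 0 (fD 2 (6 * U - 2 * X - 3 * U ^ 2)))) := by rw [hW]
    _ = 15 * (-(fD 3 (6 * U ^ 2 - 2 * U ^ 3))
          + 12 * (eulerD (U - C (1/3) * X) - (U - C (1/3) * X)) - 28 * X ^ 2) := by
        simp only [fD, eulerD_add, eulerD_sub, eulerD_neg, eulerD_mul, eulerD_pow_succ, eulerD_C,
          eulerD_zero, eulerD_one, eulerD_ofNat, eulerD_X, map_neg, map_zero, map_one, map_ofNat,
          Nat.cast_ofNat, Nat.cast_one, pow_one] at hW hW' ⊢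
        linear_combination (30 - 30 * U) * hW' - (30 - 30 * U + 90 * eulerD U) * hW

theorem stmt_2 (U : PowerSeries ℚ) (hU0 : constantCoeff U = 0)
    (hU : U = C (1/3) * X + C (1/2) * U ^ 2
        + C (1/3) * X * (25 * eulerD (eulerD U) - U)) :
    C (4/15) * fD 3 (fD 5 (fD 7 (fD 9 (fD 11 (X ^ 2 * U)))))
      = -(fD 3 (6 * U ^ 2 - 2 * U ^ 3))
        + 12 * (eulerD (U - C (1/3) * X) - (U - C (1/3) * X))
        - 28 * X ^ 2 :=
  stmt_2_general U hU
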